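/- Under the ADMM setup, the sequence of equality-constraint residuals converges to zero: Ax⁽ᵏ⁾ − z⁽ᵏ⁾ → 0 as k → ∞. -/

import Mathlib

open scoped BigOperators
open Matrix Filter

/-- Euclidean norm on `ℝ^n`. -/
noncomputable def eNorm2 {n : ℕ} (v : Fin n → ℝ) : ℝ := Real.sqrt (∑ i, v i ^ 2)

/-- Euclidean inner product on `ℝ^n`. -/
def edot {n : ℕ} (u v : Fin n → ℝ) : ℝ := ∑ i, u i * v i

lemma edot_comm {n : ℕ} (u v : Fin n → ℝ) : edot u v = edot v u := by
  simp [edot, mul_comm]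

lemma edot_add_right {n : ℕ} (u v w : Fin n → ℝ) : edot u (v + w) = edot u v + edot u w := by
  simp [edot, mul_add, Finset.sum_add_distrib]

lemma edot_sub_right {n : ℕ} (u v w : Fin n → ℝ) : edot u (v - w) = edot u v - edot u w := by
  simp [edot, mul_sub, Finset.sum_sub_distrib]

lemma edot_smul_right {n : ℕ} (c : ℝ) (u v : Fin n → ℝ) : edot u (c • v) = c * edot u v := by
  simp [edot, Finset.mul_sum]; ring_nf
  exact Finset.sum_congr rfl fun i _ => by ring

lemma edot_add_left {n : ℕ} (u v w : Fin n → ℝ) : edot (u + v) w = edot u w + edot v w := by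
  rw [edot_comm, edot_add_right, edot_comm w u, edot_comm w v]

lemma edot_sub_left {n : ℕ} (u v w : Fin n → ℝ) : edot (u - v) w = edot u w - edot v w := by
  rw [edot_comm, edot_sub_right, edot_comm w u, edot_comm w v]

lemma edot_smul_left {n : ℕ} (c : ℝ) (u v : Fin n → ℝ) : edot (c • u) v = c * edot u v := by
  rw [edot_comm, edot_smul_right, edot_comm]

lemma edot_self_nonneg {n : ℕ} (u : Fin n → ℝ) : 0 ≤ edot u u :=
  Finset.sum_nonneg fun i _ => mul_self_nonneg _

lemma eNorm2_sq {n : ℕ} (v : Fin n → ℝ) : eNorm2 v ^ 2 = edot v v := by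
  rw [eNorm2, Real.sq_sqrt (Finset.sum_nonneg fun i _ => sq_nonneg _)]
  simp [edot, sq]


lemma edot_neg_left {n : ℕ} (u v : Fin n → ℝ) : edot (-u) v = -edot u v := by
  simp [edot]

lemma edot_neg_right {n : ℕ} (u v : Fin n → ℝ) : edot u (-v) = -edot u v := by
  rw [edot_comm, edot_neg_left, edot_comm]

lemma eNorm2_sub_comm {n : ℕ} (u v : Fin n → ℝ) : eNorm2 (u - v) = eNorm2 (v - u) := by
  unfold eNorm2
  congr 1
  apply Finset.sum_congr rfl
  intro i _
  simp only [Pi.sub_apply]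
  ring

lemma nonneg_of_linear (E C : ℝ) (hC : 0 ≤ C)
    (h : ∀ t : ℝ, 0 < t → t ≤ 1 → 0 ≤ t * E + t ^ 2 * C) : 0 ≤ E := by
  by_contra h'
  push_neg at h'
  rcases eq_or_lt_of_le hC with hC0 | hC0
  · have := h 1 one_pos le_rfl
    nlinarith
  · have ht0 : 0 < min 1 (-E / (2 * C)) := by
      apply lt_min one_pos
      apply div_pos (by linarith) (by linarith)
    have ht1 : min 1 (-E / (2 * C)) ≤ 1 := min_le_left _ _
    have ht2 : min 1 (-E / (2 * C)) ≤ -E / (2 * C) := min_le_right _ _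
    have := h _ ht0 ht1
    set t := min 1 (-E / (2 * C)) with ht
    have htC : t * C ≤ -E / 2 := by
      rw [le_div_iff₀ (by positivity : (0:ℝ) < 2 * C)] at ht2
      nlinarith
    nlinarith [mul_pos ht0 (by linarith : (0:ℝ) < -E / 2)]

lemma vi_gen {p m : ℕ} (G : (Fin p → ℝ) → ℝ) (hG : ConvexOn ℝ Set.univ G)
    (M : Matrix (Fin m) (Fin p) ℝ) (ρ : ℝ) (hρ : 0 < ρ)
    (b c : Fin m → ℝ) (x' : Fin p → ℝ)
    (hmin : ∀ y, G x' + edot b (M.mulVec x') + (ρ/2) * eNorm2 (M.mulVec x' - c) ^ 2 ≤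
      G y + edot b (M.mulVec y) + (ρ/2) * eNorm2 (M.mulVec y - c) ^ 2) :
    ∀ y, G x' ≤ G y + edot (b + ρ • (M.mulVec x' - c)) (M.mulVec y - M.mulVec x') := by
  intro y
  set s : Fin m → ℝ := M.mulVec y - M.mulVec x' with hs
  have key : ∀ t : ℝ, 0 < t → t ≤ 1 →
      0 ≤ t * (G y - G x' + edot b s + ρ * edot (M.mulVec x' - c) s)
        + t ^ 2 * ((ρ/2) * edot s s) := by
    intro t ht0 ht1
    have hcvx : G (x' + t • (y - x')) ≤ (1 - t) * G x' + t * G y := by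
      have h2 := hG.2 (Set.mem_univ x') (Set.mem_univ y) (by linarith : (0:ℝ) ≤ 1 - t)
        (le_of_lt ht0) (by ring)
      have : x' + t • (y - x') = (1 - t) • x' + t • y := by
        funext i; simp [Pi.smul_apply]; ring
      rw [this]; exact h2
    have hmv : M.mulVec (x' + t • (y - x')) = M.mulVec x' + t • s := by
      rw [hs, Matrix.mulVec_add, Matrix.mulVec_smul, Matrix.mulVec_sub]
    have h3 := hmin (x' + t • (y - x'))
    rw [hmv] at h3
    have e1 : edot b (M.mulVec x' + t • s) = edot b (M.mulVec x') + t * edot b s := by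
      rw [edot_add_right, edot_smul_right]
    have e2 : eNorm2 (M.mulVec x' + t • s - c) ^ 2
        = eNorm2 (M.mulVec x' - c) ^ 2 + 2 * t * edot (M.mulVec x' - c) s
          + t ^ 2 * edot s s := by
      rw [eNorm2_sq, eNorm2_sq]
      have : M.mulVec x' + t • s - c = (M.mulVec x' - c) + t • s := by abel
      rw [this, edot_add_right, edot_add_left, edot_add_left, edot_smul_right,
        edot_smul_left, edot_smul_left, edot_smul_right,
        edot_comm s (M.mulVec x' - c)]
      ring
    rw [e1, e2] at h3
    nlinarith [h3, hcvx]
  have hE := nonneg_of_linear _ _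
    (by nlinarith [edot_self_nonneg s] : (0:ℝ) ≤ (ρ/2) * edot s s) key
  rw [edot_add_left, edot_smul_left]
  linarith [hE]

lemma saddle_exists {n q : ℕ} (G₁ : (Fin n → ℝ) → ℝ) (G₂ : (Fin q → ℝ) → ℝ)
    (hG₁conv : ConvexOn ℝ Set.univ G₁) (hG₂conv : ConvexOn ℝ Set.univ G₂)
    (hG₂cont : Continuous G₂)
    (A : Matrix (Fin q) (Fin n) ℝ) (xs : Fin n → ℝ)
    (hxs : ∀ y, G₁ xs + G₂ (A.mulVec xs) ≤ G₁ y + G₂ (A.mulVec y)) :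
    ∃ νs : Fin q → ℝ,
      (∀ zz, G₂ (A.mulVec xs) + edot νs (zz - A.mulVec xs) ≤ G₂ zz) ∧
      (∀ y, G₁ xs - edot νs (A.mulVec y - A.mulVec xs) ≤ G₁ y) := by
  classical
  set zs : Fin q → ℝ := A.mulVec xs with hzs
  set C : Set ((Fin q → ℝ) × ℝ) := {p | G₂ p.1 - G₂ zs < p.2} with hC
  set D : Set ((Fin q → ℝ) × ℝ) :=
    {p | ∃ y : Fin n → ℝ, p.1 = A.mulVec y ∧ p.2 ≤ G₁ xs - G₁ y} with hD
  have hCopen : IsOpen C := by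
    have : C = (fun p : (Fin q → ℝ) × ℝ => p.2 - (G₂ p.1 - G₂ zs)) ⁻¹' Set.Ioi 0 := by
      ext p; simp [hC, sub_pos]
    rw [this]
    exact (isOpen_Ioi).preimage (continuous_snd.sub
      ((hG₂cont.comp continuous_fst).sub continuous_const))
  have hCconv : Convex ℝ C := by
    rintro ⟨z1, t1⟩ h1 ⟨z2, t2⟩ h2 a b ha hb hab
    simp only [hC, Set.mem_setOf_eq] at h1 h2 ⊢
    have := hG₂conv.2 (Set.mem_univ z1) (Set.mem_univ z2) ha hb hab
    simp only [Prod.smul_mk, Prod.mk_add_mk, smul_eq_mul]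
    have h1' : a * (G₂ z1 - G₂ zs) ≤ a * t1 := by
      rcases eq_or_lt_of_le ha with h|h
      · simp [← h]
      · exact (mul_le_mul_iff_right₀ h).2 h1.le
    have h2' : b * (G₂ z2 - G₂ zs) ≤ b * t2 := by
      rcases eq_or_lt_of_le hb with h|h
      · simp [← h]
      · exact (mul_le_mul_iff_right₀ h).2 h2.le
    -- strictness: at least one of a,b positive with strict ineq
    have hstrict : a * (G₂ z1 - G₂ zs) + b * (G₂ z2 - G₂ zs) < a * t1 + b * t2 := by
      rcases lt_or_ge 0 a with hpa | hpa
      · have : a * (G₂ z1 - G₂ zs) < a * t1 := (mul_lt_mul_iff_right₀ hpa).2 h1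
        linarith
      · have ha0 : a = 0 := le_antisymm hpa ha
        have hb1 : b = 1 := by linarith
        subst ha0; subst hb1; simpa using h2
    simp only [smul_eq_mul] at this
    have hzz : a * G₂ zs + b * G₂ zs = G₂ zs := by rw [← add_mul, hab, one_mul]
    linarith
  have hDconv : Convex ℝ D := by
    rintro ⟨p1, s1⟩ h1 ⟨p2, s2⟩ h2 a b ha hb hab
    obtain ⟨y1, hy1, hs1⟩ := h1
    obtain ⟨y2, hy2, hs2⟩ := h2
    simp only at hy1 hy2 hs1 hs2
    refine ⟨a • y1 + b • y2, ?_, ?_⟩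
    · simp only [Prod.smul_mk, Prod.mk_add_mk]
      rw [hy1, hy2, Matrix.mulVec_add, Matrix.mulVec_smul, Matrix.mulVec_smul]
    · simp only [Prod.smul_mk, Prod.mk_add_mk, smul_eq_mul]
      have := hG₁conv.2 (Set.mem_univ y1) (Set.mem_univ y2) ha hb hab
      simp only [smul_eq_mul] at this
      have hxx : a * G₁ xs + b * G₁ xs = G₁ xs := by rw [← add_mul, hab, one_mul]
      nlinarith [mul_le_mul_of_nonneg_left hs1 ha, mul_le_mul_of_nonneg_left hs2 hb]
  have hdisj : Disjoint C D := by
    rw [Set.disjoint_left]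
    rintro ⟨p, t⟩ hpC ⟨y, hy, hs⟩
    simp only [hC, Set.mem_setOf_eq] at hpC
    simp only at hy hs
    rw [hy] at hpC
    have := hxs y
    linarith
  obtain ⟨f, u, hfC, hfD⟩ := geometric_hahn_banach_open hCconv hCopen hDconv hdisj
  set c : ℝ := f (0, 1) with hc
  set g : Fin q → ℝ := fun i => f (Pi.single i 1, 0) with hg
  have frep : ∀ (v : Fin q → ℝ) (t : ℝ), f (v, t) = edot g v + t * c := by
    intro v t
    have hv : ((v, t) : (Fin q → ℝ) × ℝ)
        = (∑ i, v i • ((Pi.single i 1 : Fin q → ℝ), (0:ℝ))) + t • ((0 : Fin q → ℝ), (1:ℝ)) := by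
      apply Prod.ext
      · simp only [Prod.fst_add, Prod.fst_sum, Prod.smul_fst, Prod.smul_mk, smul_zero, add_zero]
        funext j
        simp [Finset.sum_apply, Pi.single_apply, mul_ite]
      · simp only [Prod.snd_add, Prod.snd_sum, Prod.smul_snd, Prod.smul_mk, smul_zero,
          smul_eq_mul, mul_one]
        simp
    rw [hv, map_add, map_sum, f.map_smul]
    simp only [smul_eq_mul]
    congr 1
    · rw [edot]
      apply Finset.sum_congr rfl
      intro i _
      rw [f.map_smul]
      simp [hg, mul_comm]
  have hCmem : ∀ (zz : Fin q → ℝ) (t : ℝ), G₂ zz - G₂ zs < t → edot g zz + t * c < u := by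
    intro zz t ht
    have := hfC (zz, t) ht
    rwa [frep] at this
  have hDmem : ∀ (y : Fin n → ℝ) (s : ℝ), s ≤ G₁ xs - G₁ y →
      u ≤ edot g (A.mulVec y) + s * c := by
    intro y s hs'
    have := hfD (A.mulVec y, s) ⟨y, rfl, hs'⟩
    rwa [frep] at this
  have hcle : c ≤ 0 := by
    by_contra hcp
    push_neg at hcp
    have ht : (0:ℝ) < max 1 ((u - edot g zs)/c) :=
      lt_of_lt_of_le one_pos (le_max_left _ _)
    have h1 := hCmem zs (max 1 ((u - edot g zs)/c)) (by rw [sub_self]; exact ht)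
    have h2 : (u - edot g zs)/c ≤ max 1 ((u - edot g zs)/c) := le_max_right _ _
    rw [div_le_iff₀ hcp] at h2
    nlinarith
  have hclt : c < 0 := by
    rcases lt_or_eq_of_le hcle with h | h
    · exact h
    · exfalso
      have hgz : ∀ zz : Fin q → ℝ, edot g zz < u := by
        intro zz
        have := hCmem zz (G₂ zz - G₂ zs + 1) (by linarith)
        have hc0 : (G₂ zz - G₂ zs + 1) * c = 0 := by rw [h]; ring
        linarith
      have hgg : edot g g ≤ 0 := by
        by_contra hp
        push_neg at hp
        have h1 := hgz (((u + 1)/(edot g g)) • g)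
        rw [edot_smul_right] at h1
        rw [div_mul_cancel₀ _ (ne_of_gt hp)] at h1
        linarith
      have hg00 : ∀ i, g i = 0 := by
        intro i
        have h0 : edot g g = 0 := le_antisymm hgg (edot_self_nonneg g)
        have := (Finset.sum_eq_zero_iff_of_nonneg
          (fun j _ => mul_self_nonneg (g j))).1 h0 i (Finset.mem_univ i)
        nlinarith [this]
      have hgzero : ∀ zz : Fin q → ℝ, edot g zz = 0 := by
        intro zz
        rw [edot]
        apply Finset.sum_eq_zero
        intro i _
        rw [hg00 i, zero_mul]
      have h1 := hgz zs
      rw [hgzero] at h1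
      have h2 := hDmem xs 0 (by rw [sub_self])
      rw [hgzero] at h2
      simp at h2
      linarith
  set β : ℝ := (-c)⁻¹ with hβdef
  have hβpos : 0 < β := by
    rw [hβdef]
    exact inv_pos.2 (by linarith)
  have hβc : β * (-c) = 1 := inv_mul_cancel₀ (by linarith)
  have hβc' : β * c = -1 := by nlinarith [hβc]
  have hK1 : ∀ zz : Fin q → ℝ, edot g zz + (G₂ zz - G₂ zs) * c ≤ u := by
    intro zz
    by_contra hlt
    push_neg at hlt
    set X : ℝ := edot g zz + (G₂ zz - G₂ zs) * c - u with hX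
    have hXpos : 0 < X := by linarith
    have hεpos : 0 < X * β := mul_pos hXpos hβpos
    have h1 := hCmem zz (G₂ zz - G₂ zs + X * β) (by linarith)
    have h2 : (G₂ zz - G₂ zs + X * β) * c = (G₂ zz - G₂ zs) * c + X * (β * c) := by
      ring
    rw [h2, hβc'] at h1
    linarith
  have hK2 : u ≤ edot g zs := by
    have := hDmem xs 0 (by rw [sub_self])
    simpa [← hzs] using this
  refine ⟨β • g, ?_, ?_⟩
  · intro zz
    rw [edot_smul_left, edot_sub_right]
    have hkey : (G₂ zz - G₂ zs) * c ≤ edot g zs - edot g zz := by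
      have := hK1 zz
      linarith
    have F := mul_le_mul_of_nonneg_left hkey (le_of_lt hβpos)
    have hE : β * ((G₂ zz - G₂ zs) * c) = -(G₂ zz - G₂ zs) := by
      have h' : β * ((G₂ zz - G₂ zs) * c) = -((G₂ zz - G₂ zs) * (β * (-c))) := by ring
      rw [h', hβc]; ring
    have hE2 : β * (edot g zs - edot g zz) = -(β * (edot g zz - edot g zs)) := by ring
    rw [hE, hE2] at F
    linarith
  · intro y
    rw [edot_smul_left, edot_sub_right]
    have h1 := hDmem y (G₁ xs - G₁ y) le_rfl
    have hkey : (G₁ y - G₁ xs) * c ≤ edot g (A.mulVec y) - edot g zs := by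
      nlinarith [hK1 zs]
    have F := mul_le_mul_of_nonneg_left hkey (le_of_lt hβpos)
    have hE : β * ((G₁ y - G₁ xs) * c) = -(G₁ y - G₁ xs) := by
      have h' : β * ((G₁ y - G₁ xs) * c) = -((G₁ y - G₁ xs) * (β * (-c))) := by ring
      rw [h', hβc]; ring
    have hE2 : β * (edot g (A.mulVec y) - edot g zs)
        = β * edot g (A.mulVec y) - β * edot g zs := by ring
    rw [hE, hE2] at F
    linarith

/-- ADMM residual convergence: under the ADMM setup (convex continuous `G₁, G₂`, `AᵀA`
invertible, the set of minimizers of `f(x) = G₁(x) + G₂(Ax)` nonempty, `ρ > 0`, and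
sequences generated by the ADMM iteration), the equality-constraint residuals converge to
zero: `Ax⁽ᵏ⁾ − z⁽ᵏ⁾ → 0`. -/
theorem admm_residual_convergence
    (n q : ℕ) (hn : 0 < n) (hq : 0 < q)
    (G₁ : (Fin n → ℝ) → ℝ) (G₂ : (Fin q → ℝ) → ℝ)
    (hG₁conv : ConvexOn ℝ Set.univ G₁) (hG₁cont : Continuous G₁)
    (hG₂conv : ConvexOn ℝ Set.univ G₂) (hG₂cont : Continuous G₂)
    (A : Matrix (Fin q) (Fin n) ℝ) (hA : IsUnit (Aᵀ * A))
    (hexists : ∃ x0 : Fin n → ℝ, ∀ y : Fin n → ℝ,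
      G₁ x0 + G₂ (A.mulVec x0) ≤ G₁ y + G₂ (A.mulVec y))
    (ρ : ℝ) (hρ : 0 < ρ)
    (x : ℕ → Fin n → ℝ) (z ν : ℕ → Fin q → ℝ)
    (hx : ∀ k, ∀ y : Fin n → ℝ,
      G₁ (x (k+1)) + edot (ν k) (A.mulVec (x (k+1))) +
          (ρ/2) * eNorm2 (A.mulVec (x (k+1)) - z k) ^ 2 ≤
        G₁ y + edot (ν k) (A.mulVec y) + (ρ/2) * eNorm2 (A.mulVec y - z k) ^ 2)
    (hz : ∀ k, ∀ w : Fin q → ℝ,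
      G₂ (z (k+1)) - edot (ν k) (z (k+1)) +
          (ρ/2) * eNorm2 (A.mulVec (x (k+1)) - z (k+1)) ^ 2 ≤
        G₂ w - edot (ν k) w + (ρ/2) * eNorm2 (A.mulVec (x (k+1)) - w) ^ 2)
    (hν : ∀ k, ν (k+1) = ν k + ρ • (A.mulVec (x (k+1)) - z (k+1))) :
    Tendsto (fun k => A.mulVec (x k) - z k) atTop (nhds 0) := by
  classical
  obtain ⟨xs, hxs⟩ := hexists
  obtain ⟨νs, hS2, hS1⟩ := saddle_exists G₁ G₂ hG₁conv hG₂conv hG₂cont A xs hxs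
  set zs : Fin q → ℝ := A.mulVec xs with hzs
  -- variational inequality for the z-step
  have VI2 : ∀ k (w : Fin q → ℝ),
      G₂ (z (k+1)) + edot (ν (k+1)) (w - z (k+1)) ≤ G₂ w := by
    intro k w
    have hmin : ∀ w' : Fin q → ℝ,
        G₂ (z (k+1)) + edot (-(ν k)) ((1 : Matrix (Fin q) (Fin q) ℝ).mulVec (z (k+1)))
          + (ρ/2) * eNorm2 ((1 : Matrix (Fin q) (Fin q) ℝ).mulVec (z (k+1))
              - A.mulVec (x (k+1))) ^ 2
        ≤ G₂ w' + edot (-(ν k)) ((1 : Matrix (Fin q) (Fin q) ℝ).mulVec w')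
          + (ρ/2) * eNorm2 ((1 : Matrix (Fin q) (Fin q) ℝ).mulVec w'
              - A.mulVec (x (k+1))) ^ 2 := by
      intro w'
      simp only [Matrix.one_mulVec, edot_neg_left]
      rw [eNorm2_sub_comm (z (k+1)) (A.mulVec (x (k+1))),
        eNorm2_sub_comm w' (A.mulVec (x (k+1)))]
      linarith [hz k w']
    have h := vi_gen G₂ hG₂conv (1 : Matrix (Fin q) (Fin q) ℝ) ρ hρ (-(ν k))
      (A.mulVec (x (k+1))) (z (k+1)) hmin w
    simp only [Matrix.one_mulVec] at h
    have hid : -(ν k) + ρ • (z (k+1) - A.mulVec (x (k+1))) = -(ν (k+1)) := by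
      rw [hν k]
      funext i
      simp only [Pi.add_apply, Pi.neg_apply, Pi.smul_apply, Pi.sub_apply, smul_eq_mul]
      ring
    rw [hid, edot_neg_left] at h
    linarith
  -- variational inequality for the x-step
  have VI1 : ∀ k (y' : Fin n → ℝ),
      G₁ (x (k+1)) ≤ G₁ y'
        + edot (ν (k+1) + ρ • (z (k+1) - z k)) (A.mulVec y' - A.mulVec (x (k+1))) := by
    intro k y'
    have h := vi_gen G₁ hG₁conv A ρ hρ (ν k) (z k) (x (k+1)) (fun y'' => hx k y'') y'
    have hid : ν k + ρ • (A.mulVec (x (k+1)) - z k) = ν (k+1) + ρ • (z (k+1) - z k) := by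
      rw [hν k]
      funext i
      simp only [Pi.add_apply, Pi.smul_apply, Pi.sub_apply, smul_eq_mul]
      ring
    rwa [hid] at h
  -- monotonicity of the z-step "subgradients"
  have mono : ∀ k, 0 ≤ edot (ν (k+2) - ν (k+1)) (z (k+2) - z (k+1)) := by
    intro k
    have h1 := VI2 (k+1) (z (k+1))
    have h2 := VI2 k (z (k+2))
    have e1 : edot (ν (k+2)) (z (k+1) - z (k+2))
        = -(edot (ν (k+2)) (z (k+2) - z (k+1))) := by
      rw [← neg_sub (z (k+2)) (z (k+1)), edot_neg_right]
    rw [e1] at h1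
    rw [edot_sub_left]
    linarith
  -- the key Lyapunov inequality
  have key : ∀ k,
      ρ^2 * edot (A.mulVec (x (k+2)) - z (k+2)) (A.mulVec (x (k+2)) - z (k+2))
        + (edot (ν (k+2) - νs) (ν (k+2) - νs) + ρ^2 * edot (z (k+2) - zs) (z (k+2) - zs))
      ≤ edot (ν (k+1) - νs) (ν (k+1) - νs) + ρ^2 * edot (z (k+1) - zs) (z (k+1) - zs) := by
    intro k
    have h1 := VI1 (k+1) xs
    have h2 := VI2 (k+1) zs
    have h3 := hS1 (x (k+2))
    have h4 := hS2 (z (k+2))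
    have h5 := mono k
    have hsub : ν (k+2) - ν (k+1) = ρ • (A.mulVec (x (k+2)) - z (k+2)) := by
      rw [hν (k+1), add_sub_cancel_left]
    rw [hsub] at h5
    rw [hν (k+1)] at h1 h2 ⊢
    rw [← hzs] at h1
    have hρ2 : (0:ℝ) ≤ 2 * ρ := by linarith
    have h1' := mul_le_mul_of_nonneg_left h1 hρ2
    have h2' := mul_le_mul_of_nonneg_left h2 hρ2
    have h3' := mul_le_mul_of_nonneg_left h3 hρ2
    have h4' := mul_le_mul_of_nonneg_left h4 hρ2
    have h5' := mul_le_mul_of_nonneg_left h5 hρ2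
    have h6' : (0:ℝ) ≤ ρ^2 * edot (z (k+2) - z (k+1)) (z (k+2) - z (k+1)) :=
      mul_nonneg (sq_nonneg ρ) (edot_self_nonneg _)
    simp only [edot_add_left, edot_add_right, edot_sub_left, edot_sub_right,
      edot_smul_left, edot_smul_right, edot_neg_left, edot_neg_right, edot_comm]
      at h1' h2' h3' h4' h5' h6' ⊢
    ring_nf at h1' h2' h3' h4' h5' h6' ⊢
    linarith
  -- convergence of the Lyapunov function values
  set V : ℕ → ℝ := fun k =>
    edot (ν k - νs) (ν k - νs) + ρ^2 * edot (z k - zs) (z k - zs) with hV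
  have hVnonneg : ∀ k, 0 ≤ V k := by
    intro k
    have h1 := edot_self_nonneg (ν k - νs)
    have h2 := edot_self_nonneg (z k - zs)
    have := mul_nonneg (sq_nonneg ρ) h2
    simp only [hV]
    linarith
  have hkey' : ∀ m, ρ^2 * edot (A.mulVec (x (m+2)) - z (m+2)) (A.mulVec (x (m+2)) - z (m+2))
      ≤ V (m+1) - V (m+2) := by
    intro m
    have := key m
    simp only [hV]
    linarith
  have hant : Antitone (fun m => V (m+1)) := by
    apply antitone_nat_of_succ_le
    intro m
    have h := hkey' m
    have h0 : 0 ≤ ρ^2 * edot (A.mulVec (x (m+2)) - z (m+2)) (A.mulVec (x (m+2)) - z (m+2)) :=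
      mul_nonneg (sq_nonneg ρ) (edot_self_nonneg _)
    have : V (m+2) ≤ V (m+1) := by linarith
    simpa using this
  have hbdd : BddBelow (Set.range fun m => V (m+1)) := by
    refine ⟨0, ?_⟩
    rintro v ⟨m, rfl⟩
    exact hVnonneg (m+1)
  have hlim := tendsto_atTop_ciInf hant hbdd
  have hlim2 : Tendsto (fun m => V (m+2)) atTop (nhds (⨅ m, V (m+1))) := by
    have heq : (fun m => V (m+2)) = (fun m => V (m+1)) ∘ (fun m => m+1) := rfl
    rw [heq]
    exact hlim.comp (tendsto_add_atTop_nat 1)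
  have hdiff : Tendsto (fun m => V (m+1) - V (m+2)) atTop (nhds 0) := by
    have := hlim.sub hlim2
    simpa using this
  have hsq : Tendsto (fun m =>
      ρ^2 * edot (A.mulVec (x (m+2)) - z (m+2)) (A.mulVec (x (m+2)) - z (m+2)))
      atTop (nhds 0) := by
    apply tendsto_of_tendsto_of_tendsto_of_le_of_le (tendsto_const_nhds) hdiff
    · intro m
      exact mul_nonneg (sq_nonneg ρ) (edot_self_nonneg _)
    · intro m
      exact hkey' m
  have hρ2ne : (ρ^2 : ℝ) ≠ 0 := by positivity
  have hN2 : Tendsto (fun m =>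
      edot (A.mulVec (x (m+2)) - z (m+2)) (A.mulVec (x (m+2)) - z (m+2)))
      atTop (nhds 0) := by
    have h := hsq.const_mul ((ρ^2)⁻¹)
    have heq : (fun m => (ρ^2)⁻¹ *
        (ρ^2 * edot (A.mulVec (x (m+2)) - z (m+2)) (A.mulVec (x (m+2)) - z (m+2))))
        = fun m => edot (A.mulVec (x (m+2)) - z (m+2)) (A.mulVec (x (m+2)) - z (m+2)) := by
      funext m
      field_simp
    rw [heq] at h
    simpa using h
  have hNall : Tendsto (fun k => edot (A.mulVec (x k) - z k) (A.mulVec (x k) - z k))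
      atTop (nhds 0) :=
    (tendsto_add_atTop_iff_nat 2).1 hN2
  rw [tendsto_pi_nhds]
  intro i
  have hcomp : ∀ k, ((A.mulVec (x k) - z k) i)^2
      ≤ edot (A.mulVec (x k) - z k) (A.mulVec (x k) - z k) := by
    intro k
    rw [sq, edot]
    exact Finset.single_le_sum (f := fun j => (A.mulVec (x k) - z k) j * (A.mulVec (x k) - z k) j)
      (fun j _ => mul_self_nonneg _) (Finset.mem_univ i)
  have hsq2 : Tendsto (fun k => ((A.mulVec (x k) - z k) i)^2) atTop (nhds 0) := by
    apply tendsto_of_tendsto_of_tendsto_of_le_of_le (tendsto_const_nhds) hNall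
    · intro k; exact sq_nonneg _
    · intro k; exact hcomp k
  have habs : Tendsto (fun k => |(A.mulVec (x k) - z k) i|) atTop (nhds 0) := by
    have h := (Real.continuous_sqrt.tendsto 0).comp hsq2
    have heq : (fun k => Real.sqrt (((A.mulVec (x k) - z k) i)^2))
        = fun k => |(A.mulVec (x k) - z k) i| := by
      funext k
      exact Real.sqrt_sq_eq_abs _
    rw [Function.comp_def, heq] at h
    simpa using h
  have hfinal : Tendsto (fun k => (A.mulVec (x k) - z k) i) atTop (nhds 0) :=
    (tendsto_zero_iff_abs_tendsto_zero _).2 habs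
  simpa using hfinal
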